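/- arXiv:1104.0280 — 4 statements merged into one kernel-verified Lean document; each statement's English description precedes it below -/
import Mathlib

section
/- For all integers d₁, d₂, d₃, the coefficient of H₁²H₂²H₃ in (homogeneous degree-4 component of [X]·σ) · (d₁H₁ + d₂H₂ + d₃H₃) equals 36(d₁+d₂) + 24d₃. (This is the Chern invariant ∫_X c₂(T_X)c₁(E) for the line bundle E = O(d₁,d₂,d₃)|_X.) -/
/-!
Write `𝔪 = (H₁, H₂, H₃)`. Since `L` is homogeneous of degree 1, taking the degree-4 part of
`[X]·σ` before multiplying by `L` does not change the coefficient of the quintic `H₁²H₂²H₃`.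
As `[X]·L ∈ 𝔪³`, that coefficient only sees `σ` modulo `𝔪³`, i.e. its 2-jet. Every factor of `σ`
is `1 + a + b` modulo `𝔪³` with `a ∈ 𝔪`, `b ∈ 𝔪²`, and such expansions multiply like truncated
power series. The linear terms of `σ` cancel (`c₁(T_X) = 0`: `X` is Calabi–Yau), leaving
`σ ≡ 1 + H₁² + H₂² + H₃² + 5H₁H₂ + 2H₁H₃ + 2H₂H₃`, after which the coefficient is read off an
explicit polynomial.
-/

open MvPolynomial Finset

noncomputable section

/-- The three hyperplane classes `H₁, H₂, H₃` of `ℙ²×ℙ²×ℙ¹`,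
as variables of the polynomial ring `ℤ[H₁,H₂,H₃]`. -/
def H1 : MvPolynomial (Fin 3) ℤ := X 0
def H2 : MvPolynomial (Fin 3) ℤ := X 1
def H3 : MvPolynomial (Fin 3) ℤ := X 2

/-- `∫p` : the coefficient of `H₁²H₂²H₃` in `p`, i.e. the degree map of
`ℙ²×ℙ²×ℙ¹` normalized by `H₁·H₁·H₂·H₂·H₃ = 1`. -/
def intX (p : MvPolynomial (Fin 3) ℤ) : ℤ :=
  coeff (Finsupp.single 0 2 + Finsupp.single 1 2 + Finsupp.single 2 1) p

/-- `[X] = (2H₁+2H₂)(H₁+H₂+2H₃)`, the class of the complete-intersection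
Calabi-Yau 3-fold `X ⊂ ℙ²×ℙ²×ℙ¹` cut out by a section of `O(2,2,0) ⊕ O(1,1,2)`. -/
def Xcls : MvPolynomial (Fin 3) ℤ := (2 * H1 + 2 * H2) * (H1 + H2 + 2 * H3)

/-- The pushforward of `c₁(O(d₁,d₂,d₃)|_X)`, i.e. the linear form `d₁H₁+d₂H₂+d₃H₃`. -/
def L (d₁ d₂ d₃ : ℤ) : MvPolynomial (Fin 3) ℤ := C d₁ * H1 + C d₂ * H2 + C d₃ * H3

/-- `σ = (1+H₁)³(1+H₂)³(1+H₃)² · (Σ_{k<6} (−(2H₁+2H₂))^k) · (Σ_{k<6} (−(H₁+H₂+2H₃))^k)`,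
the truncated total Chern class of `T_X` divided by `[X]` (adjunction formula with
truncated geometric series for the inverses). -/
def sigmaX : MvPolynomial (Fin 3) ℤ :=
  (1 + H1) ^ 3 * (1 + H2) ^ 3 * (1 + H3) ^ 2 *
    (∑ k ∈ Finset.range 6, (-(2 * H1 + 2 * H2)) ^ k) *
    (∑ k ∈ Finset.range 6, (-(H1 + H2 + 2 * H3)) ^ k)

namespace MvPolynomial

variable {σ R : Type*} [CommSemiring R]

theorem X_mem_idealOfVars (i : σ) : X i ∈ idealOfVars σ R :=
  Ideal.subset_span ⟨i, rfl⟩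

theorem coeff_mul_ofNat (m : σ →₀ ℕ) (p : MvPolynomial σ R) (n : ℕ) [n.AtLeastTwo] :
    coeff m (p * ofNat(n)) = coeff m p * ofNat(n) := by
  rw [← map_ofNat C, mul_comm, coeff_C_mul, mul_comm]

theorem coeff_eq_of_sModEq_pow_idealOfVars {R : Type*} [CommRing R] {n : ℕ}
    {p q : MvPolynomial σ R}
    (h : p ≡ q [SMOD idealOfVars σ R ^ n]) {d : σ →₀ ℕ} (hd : d.degree < n) :
    coeff d p = coeff d q := by
  rw [SModEq.sub_mem, mem_pow_idealOfVars_iff'] at h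
  simpa [sub_eq_zero] using h d hd

theorem coeff_homogeneousComponent_mul_of_isHomogeneous {m n : ℕ} {q : MvPolynomial σ R}
    (hq : q.IsHomogeneous m) (p : MvPolynomial σ R) {d : σ →₀ ℕ} (hd : d.degree = n + m) :
    coeff d (homogeneousComponent n p * q) = coeff d (p * q) := by
  conv_rhs => rw [← sum_homogeneousComponent p]
  rw [Finset.sum_mul, coeff_sum, Finset.sum_eq_single n]
  · intro i _ hin
    exact ((homogeneousComponent_isHomogeneous i p).mul hq).coeff_eq_zero (by omega)
  · intro hn
    rw [homogeneousComponent_eq_zero _ _ (by simpa [Nat.lt_succ_iff] using hn), zero_mul, coeff_zero]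

end MvPolynomial

section TwoJet

variable {A : Type*} [CommRing A] (I : Ideal A)

def HasTwoJet (x a b : A) : Prop :=
  a ∈ I ∧ b ∈ I ^ 2 ∧ x ≡ 1 + a + b [SMOD I ^ 3]

variable {I}

theorem HasTwoJet.mul {x y a b a' b' : A} (hx : HasTwoJet I x a b) (hy : HasTwoJet I y a' b') :
    HasTwoJet I (x * y) (a + a') (b + b' + a * a') := by
  obtain ⟨ha, hb, hx⟩ := hx
  obtain ⟨ha', hb', hy⟩ := hy
  refine ⟨add_mem ha ha', add_mem (add_mem hb hb') (pow_two I ▸ Ideal.mul_mem_mul ha ha'), ?_⟩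
  refine (hx.mul hy).trans (SModEq.sub_mem.mpr ?_)
  have hab' : a * b' ∈ I ^ 3 := pow_succ' I 2 ▸ Ideal.mul_mem_mul ha hb'
  have hba' : b * a' ∈ I ^ 3 := pow_succ I 2 ▸ Ideal.mul_mem_mul hb ha'
  have hbb' : b * b' ∈ I ^ 3 :=
    Ideal.pow_le_pow_right (by norm_num) (pow_add I 2 2 ▸ Ideal.mul_mem_mul hb hb')
  convert add_mem (add_mem hab' hba') hbb' using 1
  ring

theorem hasTwoJet_one_add_pow {h : A} (hh : h ∈ I) (n : ℕ) :
    HasTwoJet I ((1 + h) ^ n) (n * h) (n.choose 2 * h ^ 2) := by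
  induction n with
  | zero => simp [HasTwoJet]
  | succ n ih =>
    have h₁ : HasTwoJet I (1 + h) h 0 := ⟨hh, zero_mem _, by rw [add_zero]⟩
    convert ih.mul h₁ using 1
    · rw [pow_succ]
    · push_cast; ring
    · rw [Nat.choose_succ_succ, Nat.choose_one_right]; push_cast; ring

theorem hasTwoJet_geom_sum {x : A} (hx : x ∈ I) {n : ℕ} (hn : 3 ≤ n) :
    HasTwoJet I (∑ k ∈ Finset.range n, x ^ k) x (x ^ 2) := by
  refine ⟨hx, Ideal.pow_mem_pow hx 2, ?_⟩
  induction n, hn using Nat.le_induction with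
  | base => simp [Finset.sum_range_succ, add_assoc]
  | succ n hn ih =>
    rw [Finset.sum_range_succ]
    have hxn : x ^ n ∈ I ^ 3 := Ideal.pow_le_pow_right hn (Ideal.pow_mem_pow hx n)
    simpa using ih.add (SModEq.zero.mpr hxn)

theorem SModEq.mul_left_of_mem_pow {m n : ℕ} {a x y : A} (ha : a ∈ I ^ m)
    (h : x ≡ y [SMOD I ^ n]) : a * x ≡ a * y [SMOD I ^ (m + n)] := by
  rw [SModEq.sub_mem, ← mul_sub, pow_add]
  exact Ideal.mul_mem_mul ha (SModEq.sub_mem.mp h)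

end TwoJet

def sigmaXDegTwo : MvPolynomial (Fin 3) ℤ :=
  H1 ^ 2 + H2 ^ 2 + H3 ^ 2 + 5 * H1 * H2 + 2 * H1 * H3 + 2 * H2 * H3

theorem hasTwoJet_sigmaX : HasTwoJet (idealOfVars (Fin 3) ℤ) sigmaX 0 sigmaXDegTwo := by
  have hX := X_mem_idealOfVars (σ := Fin 3) (R := ℤ)
  have ha : -(2 * H1 + 2 * H2) ∈ idealOfVars (Fin 3) ℤ := by
    apply_rules [neg_mem, add_mem, Ideal.mul_mem_left, hX]
  have hb : -(H1 + H2 + 2 * H3) ∈ idealOfVars (Fin 3) ℤ := by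
    apply_rules [neg_mem, add_mem, Ideal.mul_mem_left, hX]
  have hσ := ((((hasTwoJet_one_add_pow (hX 0) 3).mul (hasTwoJet_one_add_pow (hX 1) 3)).mul
    (hasTwoJet_one_add_pow (hX 2) 2)).mul (hasTwoJet_geom_sum ha (by norm_num : 3 ≤ 6))).mul
    (hasTwoJet_geom_sum hb (by norm_num : 3 ≤ 6))
  convert hσ using 1
  · rfl
  · simp only [H1, H2, H3]
    push_cast
    ring
  · norm_num [sigmaXDegTwo, H1, H2, H3, Nat.choose]
    ring

theorem intX_mul_L (p : MvPolynomial (Fin 3) ℤ) (d₁ d₂ d₃ : ℤ) :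
    intX (p * L d₁ d₂ d₃) = d₁ * intX (p * H1) + d₂ * intX (p * H2) + d₃ * intX (p * H3) := by
  simp only [intX, L, mul_add, coeff_add, mul_left_comm p (C _), coeff_C_mul]

theorem intX_Xcls_mul_L_mul_one_add_sigmaXDegTwo (d₁ d₂ d₃ : ℤ) :
    intX (Xcls * L d₁ d₂ d₃ * (1 + sigmaXDegTwo)) = 36 * (d₁ + d₂) + 24 * d₃ := by
  have h (i : Fin 3) : intX (Xcls * (1 + sigmaXDegTwo) * X i) = ![36, 36, 24] i := by
    fin_cases i <;>
    · simp only [intX, Xcls, sigmaXDegTwo, H1, H2, H3]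
      ring_nf
      simp [X, monomial_pow, monomial_mul, coeff_mul_ofNat, coeff_monomial, Finsupp.ext_iff,
        Fin.forall_fin_succ]
  rw [mul_right_comm, intX_mul_L, H1, H2, H3, h, h, h]
  simp only [Matrix.cons_val_zero, Matrix.cons_val_one, Matrix.cons_val]
  ring

/-- `∫_X c₂(T_X)c₁(E) = 36(d₁+d₂) + 24d₃` for `E = O(d₁,d₂,d₃)|_X`: the coefficient of
`H₁²H₂²H₃` in (degree-4 component of `[X]·σ`) · `(d₁H₁+d₂H₂+d₃H₃)`. -/
theorem statement3 (d₁ d₂ d₃ : ℤ) :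
    intX (homogeneousComponent 4 (Xcls * sigmaX) * L d₁ d₂ d₃) =
      36 * (d₁ + d₂) + 24 * d₃ := by
  have hdeg : (Finsupp.single 0 2 + Finsupp.single 1 2 + Finsupp.single 2 1 : Fin 3 →₀ ℕ).degree
      = 4 + 1 := by
    simp [Finsupp.degree_eq_weight_one, map_add, Finsupp.weight_apply, Finsupp.sum_single_index]
  have hL : (L d₁ d₂ d₃).IsHomogeneous 1 :=
    ((isHomogeneous_C_mul_X d₁ 0).add (isHomogeneous_C_mul_X d₂ 1)).add (isHomogeneous_C_mul_X d₃ 2)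
  have hXL : Xcls * L d₁ d₂ d₃ ∈ idealOfVars (Fin 3) ℤ ^ 3 := by
    rw [pow_three', Xcls, L, H1, H2, H3]
    refine Ideal.mul_mem_mul (Ideal.mul_mem_mul ?_ ?_) ?_ <;>
      apply_rules [add_mem, Ideal.mul_mem_left, X_mem_idealOfVars]
  calc intX (homogeneousComponent 4 (Xcls * sigmaX) * L d₁ d₂ d₃)
      _ = intX (Xcls * L d₁ d₂ d₃ * sigmaX) := by
        rw [intX, coeff_homogeneousComponent_mul_of_isHomogeneous hL _ hdeg, mul_right_comm]; rfl
      _ = intX (Xcls * L d₁ d₂ d₃ * (1 + 0 + sigmaXDegTwo)) :=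
        coeff_eq_of_sModEq_pow_idealOfVars (hasTwoJet_sigmaX.2.2.mul_left_of_mem_pow hXL)
          (by omega)
      _ = 36 * (d₁ + d₂) + 24 * d₃ := by
        rw [add_zero, intX_Xcls_mul_L_mul_one_add_sigmaXDegTwo]

end
end

section
/- For all integers a₁, a₂, a₃, b₁, b₂, b₃, setting α = a₁H₁+a₂H₂+a₃H₃ and β = b₁H₁+b₂H₂+b₃H₃, the coefficient of H₁²H₂²H₃ in (homogeneous degree-4 component of [X]·σ)·(α+β) equals 36(a₁+b₁+a₂+b₂) + 24(a₃+b₃). (This is the Chern invariant ∫_X c₂(T_X)c₁(E) for the rank-2 bundle E = O(a₁,a₂,a₃)|_X ⊕ O(b₁,b₂,b₃)|_X, whose first Chern class is α+β.) -/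
/-!
`∫` factors through the Chow ring `ℤ[H₁,H₂,H₃]/(H₁³,H₂³,H₃²)`, in which every class of degree `≥ 6`
vanishes. There the truncated geometric series in `σ` are genuine inverses, so `σ · c(N) = c(T_P)`
with `c(N) = (1+2H₁+2H₂)(1+H₁+H₂+2H₃)` and `c(T_P) = (1+H₁)³(1+H₂)³(1+H₃)²`. As `α+β` is linear,
`∫` only sees the degree-4 part of `[X]σ`, so all of `[X]σ` may be used instead. Against the
degree-3 class `[X](α+β)` only `c(T_X)` up to degree 2 matters: `c₁(T_X) = 0` and
`c₂(T_X) = H₁² + 5H₁H₂ + H₂² + 2H₁H₃ + 2H₂H₃ + H₃²`, with `∫[X]c₂(T_X)Hᵢ = 36, 36, 24`.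
-/

open MvPolynomial Finset

noncomputable section

theorem MvPolynomial.coeff_homogeneousComponent_mul {σ R : Type*} [CommSemiring R]
    {p q : MvPolynomial σ R} {n k : ℕ} (hq : q.IsHomogeneous k) {m : σ →₀ ℕ}
    (hm : m.degree = n + k) :
    coeff m (homogeneousComponent n p * q) = coeff m (p * q) := by
  classical
  rw [coeff_mul, coeff_mul]
  refine Finset.sum_congr rfl fun ⟨d, e⟩ hde => ?_
  rw [HasAntidiagonal.mem_antidiagonal] at hde
  dsimp only at hde ⊢
  by_cases he : coeff e q = 0
  · rw [he, mul_zero, mul_zero]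
  · have hdeg : e.degree = k := by rw [Finsupp.degree_eq_weight_one]; exact hq he
    rw [coeff_homogeneousComponent, if_pos]
    rw [← hde, map_add] at hm
    omega

theorem MvPolynomial.coeff_eq_zero_of_mem_span_monomial {σ R : Type*} [CommSemiring R]
    {S : Set (σ →₀ ℕ)} {p : MvPolynomial σ R}
    (hp : p ∈ Ideal.span ((fun s => monomial s (1 : R)) '' S)) {m : σ →₀ ℕ}
    (hm : ∀ s ∈ S, ¬ s ≤ m) : coeff m p = 0 := by
  by_contra h
  obtain ⟨s, hs, hsm⟩ := mem_ideal_span_monomial_image.1 hp m (mem_support_iff.2 h)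
  exact hm s hs hsm

theorem sum_range_neg_pow_mul_one_add {R : Type*} [CommRing R] {u : R} {n : ℕ}
    (hu : u ^ n = 0) : (∑ k ∈ Finset.range n, (-u) ^ k) * (1 + u) = 1 := by
  have h := geom_sum_mul_neg (-u) n
  rwa [sub_neg_eq_add, neg_pow, hu, mul_zero, sub_zero] at h

section NilpotentGenerators

variable {R : Type*} [CommRing R] {x y z : R}

theorem linear_form_pow_six_eq_zero (hx : x ^ 3 = 0) (hy : y ^ 3 = 0) (hz : z ^ 2 = 0)
    (a b c : ℤ) : ((a : R) * x + b * y + c * z) ^ 6 = 0 := by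
  have hx' : ∀ n, 3 ≤ n → x ^ n = 0 := fun n hn => pow_eq_zero_of_le hn hx
  have hy' : ∀ n, 3 ≤ n → y ^ n = 0 := fun n hn => pow_eq_zero_of_le hn hy
  have hz' : ∀ n, 2 ≤ n → z ^ n = 0 := fun n hn => pow_eq_zero_of_le hn hz
  ring_nf
  simp only [hx', hy', hz', mul_zero, zero_mul, add_zero, Nat.reduceLeDiff, le_refl]

set_option maxRecDepth 10000 in
theorem adjunction_mul_linear_form (hx : x ^ 3 = 0) (hy : y ^ 3 = 0) (hz : z ^ 2 = 0)
    (d₁ d₂ d₃ : ℤ) :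
    (2 * x + 2 * y) * (x + y + 2 * z) * (d₁ * x + d₂ * y + d₃ * z) *
        ((1 + x) ^ 3 * (1 + y) ^ 3 * (1 + z) ^ 2) =
      ((2 * x + 2 * y) * (x + y + 2 * z) * (d₁ * x + d₂ * y + d₃ * z) +
          (36 * d₁ + 36 * d₂ + 24 * d₃) * (x ^ 2 * y ^ 2 * z)) *
        (1 + (2 * x + 2 * y)) * (1 + (x + y + 2 * z)) := by
  have hx' : ∀ n, 3 ≤ n → x ^ n = 0 := fun n hn => pow_eq_zero_of_le hn hx
  have hy' : ∀ n, 3 ≤ n → y ^ n = 0 := fun n hn => pow_eq_zero_of_le hn hy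
  have hz' : ∀ n, 2 ≤ n → z ^ n = 0 := fun n hn => pow_eq_zero_of_le hn hz
  ring_nf
  simp only [hx', hy', hz', mul_zero, zero_mul, add_zero, Nat.reduceLeDiff, le_refl]

end NilpotentGenerators

def chowIdeal : Ideal (MvPolynomial (Fin 3) ℤ) := Ideal.span {X 0 ^ 3, X 1 ^ 3, X 2 ^ 2}

theorem chowIdeal_eq_span_monomial : chowIdeal =
    Ideal.span ((fun s => monomial s (1 : ℤ)) ''
      {Finsupp.single 0 3, Finsupp.single 1 3, Finsupp.single 2 2}) := by
  simp [chowIdeal, Set.image_insert_eq, X_pow_eq_monomial]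

theorem intX_eq_zero_of_mem_chowIdeal {p : MvPolynomial (Fin 3) ℤ} (hp : p ∈ chowIdeal) :
    intX p = 0 := by
  rw [chowIdeal_eq_span_monomial] at hp
  refine coeff_eq_zero_of_mem_span_monomial hp ?_
  simp only [Set.mem_insert_iff, Set.mem_singleton_iff, forall_eq_or_imp, forall_eq,
    Finsupp.le_def]
  refine ⟨fun h => ?_, fun h => ?_, fun h => ?_⟩
  · simpa using h 0
  · simpa using h 1
  · simpa using h 2

theorem intX_eq_of_mk_eq {p q : MvPolynomial (Fin 3) ℤ}
    (h : Ideal.Quotient.mk chowIdeal p = Ideal.Quotient.mk chowIdeal q) : intX p = intX q := by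
  rw [← sub_eq_zero, intX, intX, ← coeff_sub]
  exact intX_eq_zero_of_mem_chowIdeal (Ideal.Quotient.eq.1 h)

theorem L_add (a₁ a₂ a₃ b₁ b₂ b₃ : ℤ) :
    L a₁ a₂ a₃ + L b₁ b₂ b₃ = L (a₁ + b₁) (a₂ + b₂) (a₃ + b₃) := by
  simp only [L, map_add]; ring

theorem isHomogeneous_L (d₁ d₂ d₃ : ℤ) : (L d₁ d₂ d₃).IsHomogeneous 1 :=
  ((isHomogeneous_C_mul_X d₁ 0).add (isHomogeneous_C_mul_X d₂ 1)).add (isHomogeneous_C_mul_X d₃ 2)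

theorem isHomogeneous_Xcls : Xcls.IsHomogeneous 2 := by
  have h2X : ∀ i, (2 * X i : MvPolynomial (Fin 3) ℤ).IsHomogeneous 1 := fun i => by
    simpa using isHomogeneous_C_mul_X (2 : ℤ) i
  exact ((h2X 0).add (h2X 1)).mul (((isHomogeneous_X ℤ 0).add (isHomogeneous_X ℤ 1)).add (h2X 2))

theorem degree_top_monomial :
    (Finsupp.single 0 2 + Finsupp.single 1 2 + Finsupp.single 2 1 : Fin 3 →₀ ℕ).degree = 5 := by
  simp

theorem intX_eq_zero_of_isHomogeneous {p : MvPolynomial (Fin 3) ℤ} {n : ℕ}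
    (hp : p.IsHomogeneous n) (hn : n ≠ 5) : intX p = 0 :=
  hp.coeff_eq_zero (degree_top_monomial ▸ hn.symm)

theorem intX_homogeneousComponent_mul {p q : MvPolynomial (Fin 3) ℤ} {n k : ℕ}
    (hq : q.IsHomogeneous k) (h : n + k = 5) :
    intX (homogeneousComponent n p * q) = intX (p * q) :=
  coeff_homogeneousComponent_mul hq (degree_top_monomial.trans h.symm)

theorem intX_C_mul_top_monomial (r : ℤ) : intX (C r * (X 0 ^ 2 * X 1 ^ 2 * X 2)) = r := by
  rw [intX, coeff_C_mul, ← pow_one (X 2), X_pow_eq_monomial, X_pow_eq_monomial, X_pow_eq_monomial,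
    monomial_mul, monomial_mul, coeff_monomial, if_pos rfl, one_mul, one_mul, mul_one]

theorem mk_Xcls_mul_sigmaX_mul_L (d₁ d₂ d₃ : ℤ) :
    Ideal.Quotient.mk chowIdeal (Xcls * sigmaX * L d₁ d₂ d₃) =
      Ideal.Quotient.mk chowIdeal (Xcls * L d₁ d₂ d₃ +
        C (36 * d₁ + 36 * d₂ + 24 * d₃) * (X 0 ^ 2 * X 1 ^ 2 * X 2)) := by
  set π := Ideal.Quotient.mk chowIdeal
  have hC : ∀ d, π (C d) = d := eq_intCast (π.comp C)
  have hX : ∀ i k, X i ^ k ∈ ({X 0 ^ 3, X 1 ^ 3, X 2 ^ 2} : Set (MvPolynomial (Fin 3) ℤ)) →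
      π (X i) ^ k = 0 := fun i k h => by
    rw [← map_pow, Ideal.Quotient.eq_zero_iff_mem]; exact Ideal.subset_span h
  have hx := hX 0 3 (by simp)
  have hy := hX 1 3 (by simp)
  have hz := hX 2 2 (by simp)
  simp only [Xcls, sigmaX, L, H1, H2, H3, map_mul, map_add, map_pow, map_sum, map_neg, map_ofNat,
    map_one, hC]
  set x := π (X 0)
  set y := π (X 1)
  set z := π (X 2)
  set g₁ := ∑ k ∈ Finset.range 6, (-(2 * x + 2 * y)) ^ k
  set g₂ := ∑ k ∈ Finset.range 6, (-(x + y + 2 * z)) ^ k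
  have hg₁ : g₁ * (1 + (2 * x + 2 * y)) = 1 :=
    sum_range_neg_pow_mul_one_add (by simpa using linear_form_pow_six_eq_zero hx hy hz 2 2 0)
  have hg₂ : g₂ * (1 + (x + y + 2 * z)) = 1 :=
    sum_range_neg_pow_mul_one_add (by simpa using linear_form_pow_six_eq_zero hx hy hz 1 1 2)
  have key := adjunction_mul_linear_form hx hy hz d₁ d₂ d₃
  set P := (2 * x + 2 * y) * (x + y + 2 * z) * (d₁ * x + d₂ * y + d₃ * z)
  linear_combination g₁ * g₂ * key +
    (P + (36 * d₁ + 36 * d₂ + 24 * d₃) * (x ^ 2 * y ^ 2 * z)) * (1 + (x + y + 2 * z)) * g₂ * hg₁ +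
    (P + (36 * d₁ + 36 * d₂ + 24 * d₃) * (x ^ 2 * y ^ 2 * z)) * hg₂

/-- `∫_X c₂(T_X)c₁(E) = 36(a₁+b₁+a₂+b₂) + 24(a₃+b₃)` for the rank-2 bundle
`E = O(a₁,a₂,a₃)|_X ⊕ O(b₁,b₂,b₃)|_X`, whose first Chern class is `α+β`. -/
theorem statement8 (a₁ a₂ a₃ b₁ b₂ b₃ : ℤ) :
    intX (homogeneousComponent 4 (Xcls * sigmaX) * (L a₁ a₂ a₃ + L b₁ b₂ b₃)) =
      36 * (a₁ + b₁ + a₂ + b₂) + 24 * (a₃ + b₃) := by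
  rw [L_add, intX_homogeneousComponent_mul (isHomogeneous_L _ _ _) rfl,
    intX_eq_of_mk_eq (mk_Xcls_mul_sigmaX_mul_L _ _ _), intX, coeff_add, ← intX, ← intX,
    intX_eq_zero_of_isHomogeneous (isHomogeneous_Xcls.mul (isHomogeneous_L _ _ _)) (by norm_num),
    intX_C_mul_top_monomial]
  ring

end
end

section
/- For all integers d₁, d₂, d₃, e₁, e₂, e₃, setting α₁ = d₁H₁+d₂H₂+d₃H₃, α₂ = d₂H₁+d₁H₂+d₃H₃ and β = e₁H₁+e₂H₂+e₃H₃, the coefficient of H₁²H₂²H₃ in [X]·((α₁+β)³ − (α₂+β)³) equals −12(d₁−d₂)(e₁−e₂)(d₁+d₂+e₁+e₂+d₃+e₃). (This is the full simplification of the difference ∫_X c₁(L₁⊗L₃)³ − ∫_X c₁(L₂⊗L₃)³ computed in the paper, where L₁ = O(d₁,d₂,d₃)|_X, L₂ = O(d₂,d₁,d₃)|_X, L₃ = O(e₁,e₂,e₃)|_X.) In particular the difference is nonzero for general choices of the six integers, so tensor product is not compatible with algebraic cobordism of vector bundles. -/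
open MvPolynomial Finset

noncomputable section

/-! Both integrals are values of the cubic form `κ(a,b,c) = ∫_X (aH₁+bH₂+cH₃)³` of `X`, because
`c₁` is additive under `⊗`. The triple intersection numbers of `X` are
`H₁²H₂ = H₁H₂² = H₁H₂H₃ = 4`, `H₁²H₃ = H₂²H₃ = 2`, all others `0`, so
`κ(a,b,c) = 12a²b + 12ab² + 6a²c + 24abc + 6b²c`; the difference of `κ` at
`(d₁+e₁, d₂+e₂, d₃+e₃)` and at `(d₂+e₁, d₁+e₂, d₃+e₃)` factors as claimed. -/

theorem MvPolynomial.monomial_mul_C {σ R : Type*} [CommSemiring R] (s : σ →₀ ℕ) (a b : R) :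
    monomial s a * C b = monomial s (a * b) := by
  rw [mul_comm, C_mul_monomial, mul_comm]

lemma intX_sub (p q : MvPolynomial (Fin 3) ℤ) : intX (p - q) = intX p - intX q :=
  coeff_sub _ _ _ _

lemma L_add_L (d₁ d₂ d₃ e₁ e₂ e₃ : ℤ) :
    L d₁ d₂ d₃ + L e₁ e₂ e₃ = L (d₁ + e₁) (d₂ + e₂) (d₃ + e₃) := by
  simp only [L, C_add]
  ring

lemma intX_Xcls_mul_L_pow_three (a b c : ℤ) :
    intX (Xcls * L a b c ^ 3) =
      12 * a ^ 2 * b + 12 * a * b ^ 2 + 6 * a ^ 2 * c + 24 * a * b * c + 6 * b ^ 2 * c := by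
  simp only [intX, Xcls, L, H1, H2, H3]
  ring_nf
  simp only [X, monomial_pow, monomial_mul, ← map_ofNat C, ← map_pow, monomial_mul_C]
  simp [coeff_monomial, Finsupp.ext_iff, Fin.forall_fin_succ]

/-- Noncompatibility of tensor product with algebraic cobordism:
`∫c₁(L₁⊗L₃)³ − ∫c₁(L₂⊗L₃)³ = −12(d₁−d₂)(e₁−e₂)(d₁+d₂+e₁+e₂+d₃+e₃)` for
`L₁ = O(d₁,d₂,d₃)|_X`, `L₂ = O(d₂,d₁,d₃)|_X`, `L₃ = O(e₁,e₂,e₃)|_X`; in particular the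
difference is nonzero for general choices of the six integers. -/
theorem statement10 (d₁ d₂ d₃ e₁ e₂ e₃ : ℤ) :
    intX (Xcls * ((L d₁ d₂ d₃ + L e₁ e₂ e₃) ^ 3 - (L d₂ d₁ d₃ + L e₁ e₂ e₃) ^ 3)) =
      -12 * (d₁ - d₂) * (e₁ - e₂) * (d₁ + d₂ + e₁ + e₂ + d₃ + e₃) ∧
    ((d₁ - d₂) * (e₁ - e₂) * (d₁ + d₂ + e₁ + e₂ + d₃ + e₃) ≠ 0 →
      intX (Xcls * (L d₁ d₂ d₃ + L e₁ e₂ e₃) ^ 3) ≠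
      intX (Xcls * (L d₂ d₁ d₃ + L e₁ e₂ e₃) ^ 3)) := by
  have hdiff : intX (Xcls * ((L d₁ d₂ d₃ + L e₁ e₂ e₃) ^ 3 - (L d₂ d₁ d₃ + L e₁ e₂ e₃) ^ 3)) =
      -12 * (d₁ - d₂) * (e₁ - e₂) * (d₁ + d₂ + e₁ + e₂ + d₃ + e₃) := by
    rw [mul_sub, intX_sub, L_add_L, L_add_L, intX_Xcls_mul_L_pow_three,
      intX_Xcls_mul_L_pow_three]
    ring
  refine ⟨hdiff, fun hne => ?_⟩
  rw [← sub_ne_zero, ← intX_sub, ← mul_sub, hdiff]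
  convert mul_ne_zero (by norm_num : (-12 : ℤ) ≠ 0) hne using 1
  ring

end
end

section
/- Let R be a commutative ring and u : E → F an R-linear map between R-modules. Regard PolynomialModule R E and (PolynomialModule R F) × (PolynomialModule R E) as modules over the polynomial ring R[t], and let Φ be the R[t]-linear map sending q ∈ PolynomialModule R E to (−(u applied to q coefficientwise), t·q). Let M be the quotient of (PolynomialModule R F) × (PolynomialModule R E) by the range of Φ. Then for every c ∈ R, the quotient of M by the submodule (t − c)·M is, as an R-module, isomorphic to the quotient of F × E by the range of the R-linear map e ↦ (−u(e), c·e). (This realizes the one-parameter family over the affine line 𝔸¹ = Spec R[t] in the proof of the 'from exact sequence to direct sum' lemma, whose fiber at a unit c is F and whose fiber at c = 0 is E ⊕ G when 0 → E → F → G → 0 is exact.) -/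
open Polynomial

noncomputable section

variable {R : Type*} [CommRing R] {E F : Type*}
  [AddCommGroup E] [AddCommGroup F] [Module R E] [Module R F]

/-- Applying `u : E →ₗ[R] F` coefficientwise to polynomials with coefficients in `E`,
as an `R[X]`-linear map `PolynomialModule R E → PolynomialModule R F`. -/
def coeffwiseMap (u : E →ₗ[R] F) :
    PolynomialModule R E →ₗ[R[X]] PolynomialModule R F where
  toFun := PolynomialModule.map R u
  map_add' := map_add _
  map_smul' p q := by simpa using PolynomialModule.map_smul R u p q

/-- The `R[X]`-linear map `Φ : q ↦ (−(u applied coefficientwise to q), t·q)`. -/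
def degenMap (u : E →ₗ[R] F) :
    PolynomialModule R E →ₗ[R[X]] PolynomialModule R F × PolynomialModule R E :=
  (-(coeffwiseMap u)).prod
    (LinearMap.lsmul R[X] (PolynomialModule R E) (X : R[X]))

/-- The total space `M` of the one-parameter family over `𝔸¹ = Spec R[t]`:
the quotient of `(PolynomialModule R F) × (PolynomialModule R E)` by the range of `Φ`. -/
def degenFamily (u : E →ₗ[R] F) : Type _ :=
  (PolynomialModule R F × PolynomialModule R E) ⧸ LinearMap.range (degenMap u)

instance (u : E →ₗ[R] F) : AddCommGroup (degenFamily u) :=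
  inferInstanceAs <| AddCommGroup <|
    (PolynomialModule R F × PolynomialModule R E) ⧸ LinearMap.range (degenMap u)

instance (u : E →ₗ[R] F) : Module R[X] (degenFamily u) :=
  inferInstanceAs <| Module R[X] <|
    (PolynomialModule R F × PolynomialModule R E) ⧸ LinearMap.range (degenMap u)

instance (u : E →ₗ[R] F) : Module R (degenFamily u) :=
  inferInstanceAs <| Module R <|
    (PolynomialModule R F × PolynomialModule R E) ⧸ LinearMap.range (degenMap u)

instance (u : E →ₗ[R] F) : IsScalarTower R R[X] (degenFamily u) :=
  inferInstanceAs <| IsScalarTower R R[X] <|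
    (PolynomialModule R F × PolynomialModule R E) ⧸ LinearMap.range (degenMap u)

/-- The submodule `(t − c)·M` of the total space `M`. -/
def tcSubmodule (u : E →ₗ[R] F) (c : R) : Submodule R[X] (degenFamily u) :=
  Ideal.span {(X : R[X]) - C c} • (⊤ : Submodule R[X] (degenFamily u))

/-! Evaluation at `c` identifies `PolynomialModule R N ⧸ (t - c)` with `N`: its kernel is
`(t - c) • ⊤` because `t - c` divides `t ^ i - c ^ i`. Reducing the presentation
`M = V ⧸ range Φ` modulo `t - c` therefore yields `F × E` modulo the image of `range Φ` under
evaluation, and evaluating `Φ` at `c` gives exactly `e ↦ (-u e, c • e)`. -/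

theorem Submodule.ideal_smul_top_prod {A M N : Type*} [CommRing A] [AddCommGroup M]
    [Module A M] [AddCommGroup N] [Module A N] (I : Ideal A) :
    I • (⊤ : Submodule A (M × N)) = (I • ⊤ : Submodule A M).prod (I • ⊤) := by
  rw [← prod_top, LinearMap.prod_eq_sup_map, LinearMap.prod_eq_sup_map, smul_sup, map_smul'',
    map_smul'']

def Submodule.quotientIdealSMulTopEquiv {A V : Type*} [CommRing A] [AddCommGroup V]
    [Module A V] (S : Submodule A V) (I : Ideal A) :
    ((V ⧸ S) ⧸ I • (⊤ : Submodule A (V ⧸ S))) ≃ₗ[A] V ⧸ S ⊔ I • ⊤ :=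
  quotEquivOfEq _ _ (by rw [map_smul'', map_top, range_mkQ]) ≪≫ₗ
    quotientQuotientEquivQuotientSup S (I • ⊤)

def LinearMap.quotientSupKerEquivOfSurjective {R V W : Type*} [Ring R] [AddCommGroup V]
    [Module R V] [AddCommGroup W] [Module R W] (g : V →ₗ[R] W) (hg : Function.Surjective g)
    (S : Submodule R V) : (V ⧸ S ⊔ ker g) ≃ₗ[R] W ⧸ S.map g :=
  Submodule.quotEquivOfEq _ _
      (by rw [ker_comp, Submodule.ker_mkQ, Submodule.comap_map_eq]) ≪≫ₗ
    ((S.map g).mkQ ∘ₗ g).quotKerEquivOfSurjective ((S.map g).mkQ_surjective.comp hg)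

namespace PolynomialModule

variable {M N : Type*} [AddCommGroup M] [Module R M] [AddCommGroup N] [Module R N]

theorem sub_single_zero_eval_mem (c : R) (q : PolynomialModule R M) :
    q - single R 0 (eval c q) ∈
      Ideal.span {X - C c} • (⊤ : Submodule R[X] (PolynomialModule R M)) := by
  induction q using induction_linear with
  | zero => simp
  | add f g hf hg =>
    convert Submodule.add_mem _ hf hg using 1
    rw [map_add, single_add]
    abel
  | single i m =>
    have hsingle : single R i m - single R 0 (eval c (single R i m)) =
        (X ^ i - C c ^ i) • single R 0 m := by
      rw [sub_smul, eval_single, X_pow_eq_monomial, ← C_pow, ← monomial_zero_left,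
        monomial_smul_single, monomial_smul_single, add_zero, one_smul, single_smul]
    rw [hsingle]
    exact Submodule.smul_mem_smul
      (Ideal.mem_span_singleton.mpr (sub_dvd_pow_sub_pow X (C c) i)) trivial

theorem eval_surjective (c : R) :
    Function.Surjective (eval c : PolynomialModule R M →ₗ[R] M) :=
  fun m ↦ ⟨single R 0 m, by rw [eval_single, pow_zero, one_smul]⟩

theorem ker_eval (c : R) :
    LinearMap.ker (eval c : PolynomialModule R M →ₗ[R] M) =
      (Ideal.span {X - C c} •
        (⊤ : Submodule R[X] (PolynomialModule R M))).restrictScalars R := by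
  ext q
  refine ⟨fun hq ↦ ?_, fun hq ↦ ?_⟩
  · have := sub_single_zero_eval_mem c q
    rwa [LinearMap.mem_ker.mp hq, single_zero, sub_zero] at this
  · rw [Submodule.restrictScalars_mem] at hq
    refine Submodule.smul_induction_on (p := fun q ↦ eval c q = 0) hq ?_ ?_
    · rintro p hp q -
      obtain ⟨p, rfl⟩ := Ideal.mem_span_singleton.mp hp
      rw [eval_smul, Polynomial.eval_mul, Polynomial.eval_sub, eval_X, eval_C, sub_self,
        zero_mul, zero_smul]
    · intro q q' hq hq'
      rw [map_add, hq, hq', add_zero]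

theorem ker_eval_prodMap_eval (c : R) :
    LinearMap.ker ((eval c).prodMap (eval c) :
        PolynomialModule R M × PolynomialModule R N →ₗ[R] M × N) =
      (Ideal.span {X - C c} • (⊤ : Submodule R[X]
        (PolynomialModule R M × PolynomialModule R N))).restrictScalars R := by
  rw [LinearMap.ker_prodMap, ker_eval, ker_eval, Submodule.ideal_smul_top_prod]
  rfl

end PolynomialModule

theorem eval_prodMap_comp_degenMap (u : E →ₗ[R] F) (c : R) :
    (PolynomialModule.eval c).prodMap (PolynomialModule.eval c) ∘ₗ
        (degenMap u).restrictScalars R =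
      (-u).prod (c • LinearMap.id) ∘ₗ PolynomialModule.eval c := by
  refine LinearMap.ext fun q ↦ Prod.ext ?_ ?_
  · show PolynomialModule.eval c (-PolynomialModule.map R u q) = -u (PolynomialModule.eval c q)
    rw [map_neg, ← PolynomialModule.eval_map R u q c, Algebra.algebraMap_self, RingHom.id_apply]
  · show PolynomialModule.eval c ((X : R[X]) • q) = c • PolynomialModule.eval c q
    rw [PolynomialModule.eval_smul, eval_X]

theorem map_eval_prodMap_range_degenMap (u : E →ₗ[R] F) (c : R) :
    ((LinearMap.range (degenMap u)).restrictScalars R).map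
        ((PolynomialModule.eval c).prodMap (PolynomialModule.eval c)) =
      LinearMap.range ((-u).prod (c • LinearMap.id)) := by
  rw [← LinearMap.range_restrictScalars, ← LinearMap.range_comp, eval_prodMap_comp_degenMap,
    LinearMap.range_comp_of_range_eq_top _
      (LinearMap.range_eq_top.mpr (PolynomialModule.eval_surjective c))]

/-- The fiber of the one-parameter degeneration at the parameter value `c`:
the quotient `M/(t−c)M` is, as an `R`-module, isomorphic to the quotient of `F × E`
by the range of `e ↦ (−u(e), c·e)`. -/
theorem statement15 (u : E →ₗ[R] F) (c : R) :
    Nonempty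
      ((degenFamily u ⧸ tcSubmodule u c) ≃ₗ[R]
        ((F × E) ⧸ LinearMap.range ((-u).prod (c • (LinearMap.id : E →ₗ[R] E))))) := by
  let ev : PolynomialModule R F × PolynomialModule R E →ₗ[R] F × E :=
    (PolynomialModule.eval c).prodMap (PolynomialModule.eval c)
  have hev : Function.Surjective ev :=
    Prod.map_surjective.mpr
      ⟨PolynomialModule.eval_surjective c, PolynomialModule.eval_surjective c⟩
  let e : (degenFamily u ⧸ tcSubmodule u c) ≃ₗ[R[X]] _ :=
    (LinearMap.range (degenMap u)).quotientIdealSMulTopEquiv (Ideal.span {X - C c})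
  exact ⟨e.restrictScalars R ≪≫ₗ
    (Submodule.Quotient.restrictScalarsEquiv R _).symm ≪≫ₗ
    Submodule.quotEquivOfEq _ _
      (by rw [Submodule.restrictScalars_sup, PolynomialModule.ker_eval_prodMap_eval]) ≪≫ₗ
    ev.quotientSupKerEquivOfSurjective hev _ ≪≫ₗ
    Submodule.quotEquivOfEq _ _ (map_eval_prodMap_range_degenMap u c)⟩

end
end
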